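/- For every n ≥ 0, a(4n+3; −1) = −a(n), where a(n) is the Stern diatomic sequence. -/

import Mathlib

open Polynomial

/-- The Stern polynomials: a(0;z)=0, a(1;z)=1, a(2n;z)=a(n;z^2),
    a(2n+1;z)=z*a(n;z^2)+a(n+1;z^2). -/
noncomputable def stern : ℕ → Polynomial ℤ
  | 0 => 0
  | 1 => 1
  | (n+2) =>
    if _h : n % 2 = 0 then (stern (n/2+1)).comp (X^2)
    else X * (stern (n/2+1)).comp (X^2) + (stern (n/2+2)).comp (X^2)
  decreasing_by all_goals omega

/-- The Stern diatomic sequence: a(0)=0, a(1)=1, a(2n)=a(n), a(2n+1)=a(n)+a(n+1). -/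
def sternSeq : ℕ → ℕ
  | 0 => 0
  | 1 => 1
  | (n+2) =>
    if _h : n % 2 = 0 then sternSeq (n/2+1)
    else sternSeq (n/2+1) + sternSeq (n/2+2)
  decreasing_by all_goals omega

theorem sternSeq_two_mul (n : ℕ) : sternSeq (2 * n) = sternSeq n := by
  match n with
  | 0 => rfl
  | m + 1 =>
    rw [show 2 * (m + 1) = 2 * m + 2 by ring, sternSeq, dif_pos (by omega),
      show 2 * m / 2 = m by omega]

theorem sternSeq_two_mul_add_one (n : ℕ) :
    sternSeq (2 * n + 1) = sternSeq n + sternSeq (n + 1) := by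
  match n with
  | 0 => simp [sternSeq]
  | m + 1 =>
    rw [show 2 * (m + 1) + 1 = (2 * m + 1) + 2 by ring, sternSeq, dif_neg (by omega),
      show (2 * m + 1) / 2 = m by omega]

theorem stern_two_mul (n : ℕ) : stern (2 * n) = (stern n).comp (X ^ 2) := by
  match n with
  | 0 => simp [stern]
  | m + 1 =>
    rw [show 2 * (m + 1) = 2 * m + 2 by ring, stern, dif_pos (by omega),
      show 2 * m / 2 = m by omega]

theorem stern_two_mul_add_one (n : ℕ) :
    stern (2 * n + 1) = X * (stern n).comp (X ^ 2) + (stern (n + 1)).comp (X ^ 2) := by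
  match n with
  | 0 => simp [stern]
  | m + 1 =>
    rw [show 2 * (m + 1) + 1 = (2 * m + 1) + 2 by ring, stern, dif_neg (by omega),
      show (2 * m + 1) / 2 = m by omega]

theorem stern_eval_one (n : ℕ) : (stern n).eval 1 = sternSeq n := by
  induction n using Nat.strong_induction_on with
  | _ n ih =>
    obtain ⟨k, rfl | rfl⟩ := Nat.even_or_odd' n
    · rcases k.eq_zero_or_pos with rfl | hk
      · simp [stern, sternSeq]
      rw [stern_two_mul, eval_comp, sternSeq_two_mul]
      simpa using ih k (by omega)
    · rcases k.eq_zero_or_pos with rfl | hk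
      · simp [stern, sternSeq]
      rw [stern_two_mul_add_one, sternSeq_two_mul_add_one]
      simp only [eval_add, eval_mul, eval_comp, eval_pow, eval_X, one_pow, one_mul]
      rw [ih k (by omega), ih (k + 1) (by omega), Nat.cast_add]

/-- Since `(-1) ^ 2 = 1`, evaluating the odd-index recursion at `-1` only involves values at `1`. -/
theorem stern_two_mul_add_one_eval_neg_one (n : ℕ) :
    (stern (2 * n + 1)).eval (-1) = sternSeq (n + 1) - sternSeq n := by
  simp only [stern_two_mul_add_one, eval_add, eval_mul, eval_comp, eval_pow, eval_X,
    neg_one_sq, stern_eval_one]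
  ring

theorem stern_eval_neg_one (n : ℕ) :
    (stern (4 * n + 3)).eval (-1) = -(sternSeq n : ℤ) := by
  calc (stern (4 * n + 3)).eval (-1)
      = (sternSeq (2 * n + 2) : ℤ) - sternSeq (2 * n + 1) := by
        rw [show 4 * n + 3 = 2 * (2 * n + 1) + 1 by ring, stern_two_mul_add_one_eval_neg_one]
    _ = -(sternSeq n : ℤ) := by
        rw [show 2 * n + 2 = 2 * (n + 1) by ring, sternSeq_two_mul, sternSeq_two_mul_add_one]
        push_cast
        ring
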